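/- arXiv:2201.04595 — 2 statements merged into one kernel-verified Lean document; each statement's English description precedes it below -/
import Mathlib

section
/- Let n, d, t ≥ 1 be integers and let u = x_{i_1}x_{i_2}⋯x_{i_d}, v ∈ M_{n,d,t} with u ≥_slex v. Then the following two conditions are equivalent: (b) for every ω ∈ M_{n,d,t} with ω <_slex v there exists an integer s > i_1 such that x_s divides ω and x_{i_1}(ω/x_s) ≤_lex u; (b') for every ω ∈ M_{n−(d−1)(t−1),d,1} with ω <_slex v^{τ^{t−1}} there exists an integer i > i_1 such that x_i divides ω and x_{i_1}(ω/x_i) ≤_lex u^{τ^{t−1}}. -/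
open MvPolynomial

/-- A degree-`d` `t`-spread monomial of `K[x_1,…,x_n]`, recorded by its weakly increasing
(1-based) sequence of variable indices `idx 0 ≤ idx 1 ≤ ⋯` with consecutive gaps at least `t`.
For `t ≥ 1` these are exactly the `t`-spread monomials `x_{i_1}⋯x_{i_d}` with
`i_{j+1} - i_j ≥ t`, and for `t = 0` all monomials of degree `d` (written with sorted indices). -/
structure SpreadMono (n d t : ℕ) where
  idx : Fin d → ℕ
  one_le : ∀ j, 1 ≤ idx j
  le_n : ∀ j, idx j ≤ n
  spread : ∀ (j : Fin d) (h : (j : ℕ) + 1 < d), idx j + t ≤ idx ⟨(j : ℕ) + 1, h⟩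

namespace SpreadMono

variable {n d t : ℕ}

/-- The (0-based) variable of `Fin n` corresponding to the `j`-th (1-based) index. -/
def var (u : SpreadMono n d t) (j : Fin d) : Fin n :=
  ⟨u.idx j - 1, by have h1 := u.one_le j; have h2 := u.le_n j; omega⟩

/-- The exponent vector of the monomial `x_{i_1}⋯x_{i_d}`. -/
noncomputable def expVec (u : SpreadMono n d t) : Fin n →₀ ℕ :=
  ∑ j, Finsupp.single (u.var j) 1

/-- The monomial `x_{i_1}⋯x_{i_d}` as an element of `MvPolynomial (Fin n) K`. -/
noncomputable def toMvPoly (K : Type*) [Field K] (u : SpreadMono n d t) :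
    MvPolynomial (Fin n) K :=
  MvPolynomial.monomial u.expVec 1

/-- Strict lexicographic order on index sequences. -/
def seqLT (f g : Fin d → ℕ) : Prop :=
  ∃ s : Fin d, (∀ j, j < s → f j = g j) ∧ f s < g s

/-- Lexicographic order (≤) on index sequences. -/
def seqLE (f g : Fin d → ℕ) : Prop := f = g ∨ seqLT f g

/-- `u ≥_slex v`: a monomial is `slex`-larger iff its index sequence is lex-smaller. -/
def slexGE (u v : SpreadMono n d t) : Prop := seqLE u.idx v.idx

/-- `u >_slex v`. -/
def slexGT (u v : SpreadMono n d t) : Prop := seqLT u.idx v.idx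

/-- The `t`-spread lexsegment `L_t(u,v) = {w : u ≥_slex w ≥_slex v}`. -/
def lexseg (u v : SpreadMono n d t) : Set (SpreadMono n d t) :=
  {w | slexGE u w ∧ slexGE w v}

/-- The initial `t`-spread lexsegment `L^i_t(v) = {w : w ≥_slex v}`. -/
def initialSeg (v : SpreadMono n d t) : Set (SpreadMono n d t) :=
  {w | slexGE w v}

/-- The final `t`-spread lexsegment `L^f_t(u) = {w : w ≤_slex u}`. -/
def finalSeg (u : SpreadMono n d t) : Set (SpreadMono n d t) :=
  {w | slexGE u w}

/-- The ideal of `MvPolynomial (Fin n) K` generated by a set of spread monomials. -/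
noncomputable def idealOf (K : Type*) [Field K] (A : Set (SpreadMono n d t)) :
    Ideal (MvPolynomial (Fin n) K) :=
  Ideal.span ((fun w => toMvPoly K w) '' A)

end SpreadMono

/-- `a ≤_lex b` for exponent vectors of monomials of `K[x_1,…,x_m]`, for the lexicographic
order with `x_1 > x_2 > ⋯ > x_m`: either `a = b`, or at the first position where they
differ `b` has the larger exponent. -/
def monoLE {m : ℕ} (a b : Fin m →₀ ℕ) : Prop :=
  a = b ∨ ∃ i : Fin m, (∀ j, j < i → a j = b j) ∧ a i < b i

open SpreadMono

/-!
Among the exchanges `x_{i_1}(ω/x_s)` with `x_s ∣ ω`, `s > i_1`, replacing the first variable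
`x_{j_1}` of `ω` gives the lex-smallest monomial (the exchanges differ by factors
`x_{j_1}/x_s ≥_lex 1`), and when `i_1 = j_1` every exchange contains `x_{i_1}^2` and so is
lex-larger than `u`. For squarefree monomials `≤_lex` reverses the lexicographic order of sorted
index sequences, so the condition at `ω = x_{j_1}⋯x_{j_d}` reads: `i_1 < j_1` and
`(i_1, …, i_d) ≤ (i_1, j_2, …, j_d)` lexicographically. The shift `τ^{t-1}` is a bijection that
fixes first indices and preserves every comparison between indices in the same position, hence
preserves this condition as well as `ω <_slex v`.
-/

open Finsupp Function

theorem Pi.toLex_lt_toLex_iff_of_cmp {ι α β : Type*} [LT ι] [LinearOrder α] [LinearOrder β]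
    {f g : ι → α} {f' g' : ι → β} (h : ∀ i, cmp (f i) (g i) = cmp (f' i) (g' i)) :
    toLex f < toLex g ↔ toLex f' < toLex g' := by
  change Pi.Lex _ _ f g ↔ Pi.Lex _ _ f' g'
  simp only [Pi.Lex, ← cmp_eq_eq_iff, ← cmp_eq_lt_iff, h]

theorem Pi.toLex_le_toLex_iff_of_cmp {ι α β : Type*} [LinearOrder ι] [LinearOrder α]
    [LinearOrder β] {f g : ι → α} {f' g' : ι → β} (h : ∀ i, cmp (f i) (g i) = cmp (f' i) (g' i)) :
    toLex f ≤ toLex g ↔ toLex f' ≤ toLex g' := by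
  have heq : f = g ↔ f' = g' := by simp only [funext_iff, ← cmp_eq_eq_iff, h]
  rw [le_iff_eq_or_lt, le_iff_eq_or_lt, toLex_inj, toLex_inj]
  exact or_congr heq (Pi.toLex_lt_toLex_iff_of_cmp h)

theorem StrictMono.update_head {α : Type*} [Preorder α] {d : ℕ} {f : Fin d → α}
    (hf : StrictMono f) (hd : 0 < d) {a : α} (ha : a < f ⟨0, hd⟩) :
    StrictMono (Function.update f ⟨0, hd⟩ a) := by
  intro i j hij
  have hj : j ≠ ⟨0, hd⟩ := Fin.ne_of_gt (lt_of_le_of_lt (Nat.zero_le i.val) hij)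
  rw [Function.update_of_ne hj]
  by_cases hi : i = ⟨0, hd⟩
  · rw [hi, Function.update_self]
    exact ha.trans (hf (hi ▸ hij))
  · rw [Function.update_of_ne hi]
    exact hf hij

section SumSingle

variable {α : Type*} {d : ℕ} {f g : Fin d → α}

theorem Finsupp.sum_single_one_apply_self (hf : Injective f) (i : Fin d) :
    (∑ j, single (f j) 1 : α →₀ ℕ) (f i) = 1 := by
  classical
  simp [finsetSum_apply, single_apply, hf.eq_iff]

theorem Finsupp.sum_single_one_apply_eq_zero {x : α} (h : ∀ j, f j ≠ x) :
    (∑ j, single (f j) 1 : α →₀ ℕ) x = 0 := by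
  classical
  simp [finsetSum_apply, h]

theorem Finsupp.toLex_sum_single_lt_of_toLex_lt [LinearOrder α] (hf : StrictMono f)
    (hg : Monotone g) (h : toLex f < toLex g) :
    toLex (∑ j, single (g j) 1 : α →₀ ℕ) < toLex (∑ j, single (f j) 1) := by
  obtain ⟨i, hfg, hi⟩ := h
  have hg_ne : ∀ j, g j ≠ f i := by
    intro j
    rcases lt_or_ge j i with hj | hj
    · rw [← show f j = g j from hfg j hj]
      exact (hf hj).ne
    · exact (hi.trans_le (hg hj)).ne'
  refine Lex.lt_iff.2 ⟨f i, fun y hy => ?_, ?_⟩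
  · simp only [ofLex_toLex, finsetSum_apply]
    refine Finset.sum_congr rfl fun j _ => ?_
    rcases lt_or_ge j i with hj | hj
    · rw [show f j = g j from hfg j hj]
    · rw [single_eq_of_ne ((hy.trans hi).trans_le (hg hj)).ne,
        single_eq_of_ne (hy.trans_le (hf.monotone hj)).ne]
  · simp only [ofLex_toLex, sum_single_one_apply_eq_zero hg_ne,
      sum_single_one_apply_self hf.injective]
    exact one_pos

theorem Finsupp.toLex_sum_single_le_iff [LinearOrder α] (hf : StrictMono f) (hg : StrictMono g) :
    toLex (∑ j, single (f j) 1 : α →₀ ℕ) ≤ toLex (∑ j, single (g j) 1) ↔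
      toLex g ≤ toLex f := by
  constructor
  · intro h
    by_contra! hlt
    exact (toLex_sum_single_lt_of_toLex_lt hf hg.monotone hlt).not_ge h
  · intro h
    rcases h.eq_or_lt with heq | hlt
    · rw [toLex_inj.1 heq]
    · exact (toLex_sum_single_lt_of_toLex_lt hg hf.monotone hlt).le

theorem Finsupp.toLex_sum_single_lt_single_add_single_head [LinearOrder α] (hf : StrictMono f)
    (hd : 0 < d) :
    toLex (∑ j, single (f j) 1 : α →₀ ℕ) <
      toLex (single (f ⟨0, hd⟩) 1 + single (f ⟨0, hd⟩) 1) := by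
  refine Lex.lt_iff.2 ⟨f ⟨0, hd⟩, fun y hy => ?_, ?_⟩
  · have hne : ∀ j, f j ≠ y := fun j =>
      (hy.trans_le (hf.monotone (Nat.zero_le j.val : (⟨0, hd⟩ : Fin d) ≤ j))).ne'
    simp [sum_single_one_apply_eq_zero hne, single_eq_of_ne hy.ne]
  · simp [sum_single_one_apply_self hf.injective]

theorem Finsupp.toLex_sum_single_lt_of_head_eq [LinearOrder α] (hf : StrictMono f)
    (hd : 0 < d) (hfg : f ⟨0, hd⟩ = g ⟨0, hd⟩) {ℓ : Fin d} (hℓ : ℓ ≠ ⟨0, hd⟩) :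
    toLex (∑ j, single (f j) 1 : α →₀ ℕ) <
      toLex ((∑ j, single (g j) 1) - single (g ℓ) 1 + single (f ⟨0, hd⟩) 1) := by
  refine (toLex_sum_single_lt_single_add_single_head hf hd).trans_le ?_
  have hpair : single (g ⟨0, hd⟩) 1 + single (g ℓ) 1 ≤ (∑ j, single (g j) 1 : α →₀ ℕ) := by
    rw [← Finset.sum_pair (f := fun j => (single (g j) 1 : α →₀ ℕ)) hℓ.symm]
    exact Finset.sum_le_sum_of_subset (Finset.subset_univ _)
  rw [toLex_add, toLex_add]
  gcongr
  exact toLex_monotone (le_tsub_of_add_le_right (hfg ▸ hpair))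

theorem Finsupp.sum_single_update (i : Fin d) (a : α) :
    (∑ j, single (Function.update f i a j) 1 : α →₀ ℕ) =
      (∑ j, single (f j) 1) - single (f i) 1 + single a 1 := by
  have hcomp : (fun j => (single (Function.update f i a j) 1 : α →₀ ℕ)) =
      Function.update (fun j => single (f j) 1) i (single a 1) :=
    comp_update (fun x : α => (single x 1 : α →₀ ℕ)) f i a
  rw [hcomp, Finset.sum_update_of_mem (Finset.mem_univ i),
    Finset.sum_eq_add_sum_sdiff_singleton_of_mem (Finset.mem_univ i), add_tsub_cancel_left,
    add_comm]

theorem Finsupp.toLex_tsub_single_add_single_le [LinearOrder α] {F : α →₀ ℕ} {x y : α}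
    (hx : single x 1 ≤ F) (hy : single y 1 ≤ F) (hxy : x ≤ y) (a : α) :
    toLex (F - single x 1 + single a 1) ≤ toLex (F - single y 1 + single a 1) := by
  have hswap : F - single x 1 + single a 1 + single x 1 =
      F - single y 1 + single a 1 + single y 1 := by
    rw [add_right_comm, tsub_add_cancel_of_le hx, add_right_comm, tsub_add_cancel_of_le hy]
  refine le_of_add_le_add_right (a := toLex (single y 1)) ?_
  calc toLex (F - single x 1 + single a 1) + toLex (single y 1)
      ≤ toLex (F - single x 1 + single a 1) + toLex (single x 1) := by
        gcongr
        exact Lex.single_le_iff.2 hxy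
    _ = toLex (F - single y 1 + single a 1) + toLex (single y 1) := by
        rw [← toLex_add, ← toLex_add, hswap]

end SumSingle

theorem seqLE_iff_toLex_le {d : ℕ} {f g : Fin d → ℕ} : seqLE f g ↔ toLex f ≤ toLex g := by
  rw [seqLE, le_iff_eq_or_lt, toLex_inj]
  rfl

theorem monoLE_iff_toLex_le {m : ℕ} {a b : Fin m →₀ ℕ} : monoLE a b ↔ toLex a ≤ toLex b := by
  rw [monoLE, le_iff_eq_or_lt, toLex_inj]
  rfl

namespace SpreadMono

variable {n d t : ℕ}

theorem idx_injective : Injective (idx : SpreadMono n d t → Fin d → ℕ) := by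
  rintro ⟨⟩ ⟨⟩ rfl
  rfl

theorem idx_eq_var_add_one (w : SpreadMono n d t) (j : Fin d) : w.idx j = w.var j + 1 := by
  have := w.one_le j
  simp only [var]
  omega

theorem cmp_var_var (a b : SpreadMono n d t) (i j : Fin d) :
    cmp (a.var i) (b.var j) = cmp (a.idx i) (b.idx j) := by
  rw [idx_eq_var_add_one, idx_eq_var_add_one]
  exact (StrictMono.cmp_map_eq (f := fun x : Fin n => (x : ℕ) + 1)
    (fun _ _ h => Nat.succ_lt_succ h) _ _).symm

theorem var_lt_var_iff (a b : SpreadMono n d t) (i j : Fin d) :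
    a.var i < b.var j ↔ a.idx i < b.idx j := by
  rw [← cmp_eq_lt_iff, cmp_var_var, cmp_eq_lt_iff]

theorem var_eq_var_iff (a b : SpreadMono n d t) (i j : Fin d) :
    a.var i = b.var j ↔ a.idx i = b.idx j := by
  rw [← cmp_eq_eq_iff, cmp_var_var, cmp_eq_eq_iff]

theorem one_add_mul_le_idx (w : SpreadMono n d t) (j : Fin d) : 1 + j * t ≤ w.idx j := by
  obtain ⟨j, hj⟩ := j
  induction j with
  | zero => simpa using w.one_le ⟨0, hj⟩
  | succ k ih =>
    have hspread := w.spread ⟨k, by omega⟩ hj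
    have hk := ih (by omega)
    dsimp only at hspread hk
    rw [Nat.succ_mul]
    omega

theorem idx_strictMono (ht : 1 ≤ t) (w : SpreadMono n d t) : StrictMono w.idx := by
  cases d with
  | zero => exact fun i => i.elim0
  | succ d =>
    refine Fin.strictMono_iff_lt_succ.2 fun i => ?_
    have := w.spread i.castSucc (by simp)
    simp only [Fin.val_castSucc] at this
    exact lt_of_lt_of_le (by omega) this

theorem var_strictMono (ht : 1 ≤ t) (w : SpreadMono n d t) : StrictMono w.var :=
  fun _ _ h => (var_lt_var_iff w w _ _).2 (idx_strictMono ht w h)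

theorem exists_exchange_le_iff (ht : 1 ≤ t) (hd : 0 < d) (u w : SpreadMono n d t)
    (h0 : u.idx ⟨0, hd⟩ ≤ w.idx ⟨0, hd⟩) :
    (∃ ℓ : Fin d, u.idx ⟨0, hd⟩ < w.idx ℓ ∧
        monoLE (w.expVec - single (w.var ℓ) 1 + single (u.var ⟨0, hd⟩) 1) u.expVec) ↔
      u.idx ⟨0, hd⟩ < w.idx ⟨0, hd⟩ ∧
        toLex u.idx ≤ toLex (Function.update w.idx ⟨0, hd⟩ (u.idx ⟨0, hd⟩)) := by
  have hu := var_strictMono ht u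
  have hw := var_strictMono ht w
  have hsingle (ℓ : Fin d) : single (w.var ℓ) 1 ≤ w.expVec :=
    Finset.single_le_sum (f := fun j => single (w.var j) 1) (fun _ _ => zero_le)
      (Finset.mem_univ ℓ)
  have hfirst (hz : u.idx ⟨0, hd⟩ < w.idx ⟨0, hd⟩) :
      monoLE (w.expVec - single (w.var ⟨0, hd⟩) 1 + single (u.var ⟨0, hd⟩) 1) u.expVec ↔
        toLex u.idx ≤ toLex (Function.update w.idx ⟨0, hd⟩ (u.idx ⟨0, hd⟩)) := by
    have hlt : u.var ⟨0, hd⟩ < w.var ⟨0, hd⟩ := (var_lt_var_iff u w ⟨0, hd⟩ ⟨0, hd⟩).2 hz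
    rw [monoLE_iff_toLex_le, expVec, expVec, ← sum_single_update,
      toLex_sum_single_le_iff (hw.update_head hd hlt) hu]
    refine Pi.toLex_le_toLex_iff_of_cmp fun j => ?_
    by_cases hj : j = ⟨0, hd⟩
    · simp only [hj, Function.update_self, cmp_self_eq_eq]
    · simp only [Function.update_of_ne hj, cmp_var_var]
  constructor
  · rintro ⟨ℓ, hℓ, hm⟩
    have hz : u.idx ⟨0, hd⟩ < w.idx ⟨0, hd⟩ := by
      refine lt_of_le_of_ne h0 fun heq => ?_
      have hℓz : ℓ ≠ ⟨0, hd⟩ := by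
        rintro rfl
        exact hℓ.ne heq
      exact (monoLE_iff_toLex_le.1 hm).not_gt <| toLex_sum_single_lt_of_head_eq hu hd
        ((var_eq_var_iff u w ⟨0, hd⟩ ⟨0, hd⟩).2 heq) hℓz
    refine ⟨hz, (hfirst hz).1 (monoLE_iff_toLex_le.2 ?_)⟩
    exact (toLex_tsub_single_add_single_le (hsingle ⟨0, hd⟩) (hsingle ℓ)
      (hw.monotone (Nat.zero_le ℓ.val)) _).trans (monoLE_iff_toLex_le.1 hm)
  · rintro ⟨hz, hle⟩
    exact ⟨⟨0, hd⟩, hz, (hfirst hz).2 hle⟩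

theorem surjective_of_idx_eq_sub_mul
    (τ : SpreadMono n d t → SpreadMono (n - (d - 1) * (t - 1)) d 1)
    (hτ : ∀ w j, (τ w).idx j = w.idx j - (j : ℕ) * (t - 1)) : Surjective τ := by
  intro w'
  have hle (j : Fin d) : (j : ℕ) * (t - 1) ≤ (d - 1) * (t - 1) :=
    Nat.mul_le_mul_right _ (by omega)
  refine ⟨⟨fun j => w'.idx j + j * (t - 1), fun j => ?_, fun j => ?_, fun j hj => ?_⟩, ?_⟩
  · have := w'.one_le j
    omega
  · have := w'.one_le j
    have := w'.le_n j
    have := hle j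
    omega
  · have := w'.spread j hj
    dsimp only at this ⊢
    rw [Nat.succ_mul]
    omega
  · exact idx_injective (funext fun j => by rw [hτ]; simp)

theorem cmp_idx_shift (τ : SpreadMono n d t → SpreadMono (n - (d - 1) * (t - 1)) d 1)
    (hτ : ∀ w j, (τ w).idx j = w.idx j - (j : ℕ) * (t - 1)) (a b : SpreadMono n d t)
    (j : Fin d) : cmp ((τ a).idx j) ((τ b).idx j) = cmp (a.idx j) (b.idx j) := by
  have hc (w : SpreadMono n d t) : (j : ℕ) * (t - 1) ≤ w.idx j :=
    (Nat.mul_le_mul_left _ (Nat.sub_le t 1)).trans (by have := w.one_add_mul_le_idx j; omega)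
  rw [hτ, hτ]
  conv_rhs => rw [← Nat.sub_add_cancel (hc a), ← Nat.sub_add_cancel (hc b)]
  exact ((strictMono_id.add_const _).cmp_map_eq _ _).symm

end SpreadMono

theorem stmt9_general (n d t : ℕ) (hd : 1 ≤ d) (ht : 1 ≤ t)
    (u v : SpreadMono n d t) (huv : slexGE u v)
    (τ : SpreadMono n d t → SpreadMono (n - (d - 1) * (t - 1)) d 1)
    (hτ : ∀ w j, (τ w).idx j = w.idx j - (j : ℕ) * (t - 1)) :
    (∀ w : SpreadMono n d t, slexGT v w →
        ∃ ℓ : Fin d, u.idx ⟨0, hd⟩ < w.idx ℓ ∧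
          monoLE (w.expVec - Finsupp.single (w.var ℓ) 1 + Finsupp.single (u.var ⟨0, hd⟩) 1)
            u.expVec) ↔
    (∀ w : SpreadMono (n - (d - 1) * (t - 1)) d 1, slexGT (τ v) w →
        ∃ ℓ : Fin d, u.idx ⟨0, hd⟩ < w.idx ℓ ∧
          monoLE (w.expVec - Finsupp.single (w.var ℓ) 1 +
              Finsupp.single ((τ u).var ⟨0, hd⟩) 1)
            (τ u).expVec) := by
  have hcmp := cmp_idx_shift τ hτ
  have hhead (a : SpreadMono n d t) : (τ a).idx ⟨0, hd⟩ = a.idx ⟨0, hd⟩ := by simp [hτ]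
  rw [(surjective_of_idx_eq_sub_mul τ hτ).forall]
  refine forall_congr' fun w => ?_
  have hslex : slexGT (τ v) (τ w) ↔ slexGT v w := Pi.toLex_lt_toLex_iff_of_cmp (hcmp v w)
  rw [hslex]
  refine imp_congr_right fun hvw => ?_
  have hvw' : toLex v.idx < toLex w.idx := hvw
  have h0 : u.idx ⟨0, hd⟩ ≤ w.idx ⟨0, hd⟩ :=
    Pi.apply_le_of_toLex ((seqLE_iff_toLex_le.1 huv).trans hvw'.le) fun _ hj =>
      (Nat.not_lt_zero _ hj).elim
  have h0' : (τ u).idx ⟨0, hd⟩ ≤ (τ w).idx ⟨0, hd⟩ := by rwa [hhead, hhead]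
  have hτexch := exists_exchange_le_iff le_rfl hd (τ u) (τ w) h0'
  rw [hhead, hhead] at hτexch
  rw [exists_exchange_le_iff ht hd u w h0, hτexch]
  refine and_congr_right fun _ => Pi.toLex_le_toLex_iff_of_cmp fun j => ?_
  by_cases hj : j = ⟨0, hd⟩
  · simp only [hj, Function.update_self, hhead, cmp_self_eq_eq]
  · simp only [Function.update_of_ne hj, hcmp]

/-- **Lemma (conditions (b) and (b') are equivalent).** Let `u = x_{i_1}⋯x_{i_d} ≥_slex v`
in `M_{n,d,t}` and let `τ = τ^{t-1} : M_{n,d,t} → M_{n-(d-1)(t-1),d,1}` be the shifting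
operator. Then: (b) for every `ω ∈ M_{n,d,t}` with `ω <_slex v` there is `s > i_1` with
`x_s ∣ ω` and `x_{i_1}(ω/x_s) ≤_lex u`, iff (b') for every `ω ∈ M_{n-(d-1)(t-1),d,1}` with
`ω <_slex v^{τ^{t-1}}` there is `i > i_1` with `x_i ∣ ω` and
`x_{i_1}(ω/x_i) ≤_lex u^{τ^{t-1}}`. -/
theorem stmt9 (n d t : ℕ) (hn : 1 ≤ n) (hd : 1 ≤ d) (ht : 1 ≤ t)
    (u v : SpreadMono n d t) (huv : slexGE u v)
    (τ : SpreadMono n d t → SpreadMono (n - (d - 1) * (t - 1)) d 1)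
    (hτ : ∀ w j, (τ w).idx j = w.idx j - (j : ℕ) * (t - 1)) :
    (∀ w : SpreadMono n d t, slexGT v w →
        ∃ ℓ : Fin d, u.idx ⟨0, hd⟩ < w.idx ℓ ∧
          monoLE (w.expVec - Finsupp.single (w.var ℓ) 1 + Finsupp.single (u.var ⟨0, hd⟩) 1)
            u.expVec) ↔
    (∀ w : SpreadMono (n - (d - 1) * (t - 1)) d 1, slexGT (τ v) w →
        ∃ ℓ : Fin d, u.idx ⟨0, hd⟩ < w.idx ℓ ∧
          monoLE (w.expVec - Finsupp.single (w.var ℓ) 1 +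
              Finsupp.single ((τ u).var ⟨0, hd⟩) 1)
            (τ u).expVec) :=
  stmt9_general n d t hd ht u v huv τ hτ
end

section
/- Let n, d, t ≥ 1 be integers and v ∈ M_{n,d,t}. The initial t-spread lexsegment L^i_t(v) is a t-spread strongly stable set: for every ω ∈ L^i_t(v), every index j with x_j dividing ω, and every index i < j such that x_i(ω/x_j) ∈ M_{n,d,t}, one has x_i(ω/x_j) ∈ L^i_t(v). -/
open MvPolynomial

open SpreadMono

/-!
Replacing the variable `x_j` of `ω` by `x_i` with `i < j` can only increase, for every `x`, the
number of indices of the monomial that are `≤ x`. For sorted index sequences these counting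
functions determine the sequences, and a larger counting function means pointwise smaller
indices. So `x_i(ω/x_j)` has pointwise smaller indices than `ω`, hence is `≥_slex ω ≥_slex v`.
-/

namespace SpreadMono

variable {n d t : ℕ}

theorem seqLE_iff_toLex_le {f g : Fin d → ℕ} : seqLE f g ↔ toLex f ≤ toLex g := by
  rw [le_iff_eq_or_lt, toLex_inj]
  rfl

theorem seqLE_of_le {f g : Fin d → ℕ} (h : f ≤ g) : seqLE f g :=
  seqLE_iff_toLex_le.2 (Pi.toLex_monotone h)

theorem seqLE_trans {f g h : Fin d → ℕ} (hfg : seqLE f g) (hgh : seqLE g h) : seqLE f h :=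
  seqLE_iff_toLex_le.2 ((seqLE_iff_toLex_le.1 hfg).trans (seqLE_iff_toLex_le.1 hgh))

theorem idx_monotone (u : SpreadMono n d t) : Monotone u.idx := by
  cases d with
  | zero => exact fun j => j.elim0
  | succ d =>
    refine Fin.monotone_iff_le_succ.2 fun j => ?_
    have := u.spread j.castSucc (by simp)
    exact le_of_add_le_left this

theorem var_le_var_iff {u u' : SpreadMono n d t} {j k : Fin d} :
    u.var j ≤ u'.var k ↔ u.idx j ≤ u'.idx k := by
  have := u.one_le j
  have := u'.one_le k
  simp only [var, Fin.mk_le_mk]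
  omega

theorem var_monotone (u : SpreadMono n d t) : Monotone u.var :=
  fun _ _ hjk => var_le_var_iff.2 (u.idx_monotone hjk)

theorem single_var_le_expVec (u : SpreadMono n d t) (j : Fin d) :
    Finsupp.single (u.var j) 1 ≤ u.expVec :=
  Finset.single_le_sum (f := fun k => Finsupp.single (u.var k) 1) (fun _ _ => zero_le)
    (Finset.mem_univ j)

end SpreadMono

section Counting

open Finset

variable {α : Type*} [LinearOrder α]

theorem le_of_card_filter_le_le {d : ℕ} {f g : Fin d → α} (hf : Monotone f) (hg : Monotone g)
    (h : ∀ x, #{j | g j ≤ x} ≤ #{j | f j ≤ x}) : f ≤ g := by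
  intro j
  by_contra! hlt
  have hg_count : j.val + 1 ≤ #{k | g k ≤ g j} := by
    rw [← Fin.card_Iic j]
    exact card_le_card fun k hk => mem_filter.2 ⟨mem_univ k, hg (mem_Iic.1 hk)⟩
  have hf_count : #{k | f k ≤ g j} ≤ j.val := by
    rw [← Fin.card_Iio j]
    refine card_le_card fun k hk => mem_Iio.2 ?_
    by_contra! hjk
    exact (hlt.trans_le (hf hjk)).not_ge (mem_filter.1 hk).2
  have := h (g j)
  omega

variable [LocallyFiniteOrderBot α]

theorem sum_Iic_single_one (a x : α) :
    ∑ y ∈ Iic x, Finsupp.single a 1 y = if a ≤ x then 1 else 0 := by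
  classical
  simp_rw [Finsupp.single_apply, sum_ite_eq, mem_Iic]

theorem card_filter_le_eq_sum_Iic {ι : Type*} [Fintype ι] (f : ι → α) (x : α) :
    #{j | f j ≤ x} = ∑ y ∈ Iic x, (∑ j, Finsupp.single (f j) 1 : α →₀ ℕ) y := by
  simp_rw [Finsupp.finsetSum_apply]
  rw [sum_comm, card_filter]
  simp_rw [sum_Iic_single_one]

/-- `e'` arises from `e` by moving one unit from `b` down to `a`. -/
theorem sum_Iic_le_sum_Iic_of_add_single_eq {e e' : α →₀ ℕ} {a b : α} (hab : a ≤ b)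
    (h : e + Finsupp.single a 1 = e' + Finsupp.single b 1) (x : α) :
    ∑ y ∈ Iic x, e y ≤ ∑ y ∈ Iic x, e' y := by
  have hsum := congrArg (fun f : α →₀ ℕ => ∑ y ∈ Iic x, f y) h
  simp only [Finsupp.add_apply, sum_add_distrib, sum_Iic_single_one] at hsum
  split_ifs at hsum with ha hb hb <;> try omega
  exact absurd (hab.trans hb) ha

end Counting

theorem stmt11_general (n d t : ℕ)
    (v : SpreadMono n d t) (w : SpreadMono n d t) (hw : w ∈ initialSeg v)
    (p : Fin d) (i : Fin n) (hij : (i : ℕ) + 1 < w.idx p)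
    (w' : SpreadMono n d t)
    (hw' : w'.expVec = w.expVec - Finsupp.single (w.var p) 1 + Finsupp.single i 1) :
    w' ∈ initialSeg v := by
  have hi : i ≤ w.var p := by
    change (i : ℕ) ≤ w.idx p - 1
    omega
  have hexchange : w.expVec + Finsupp.single i 1 = w'.expVec + Finsupp.single (w.var p) 1 := by
    rw [hw', add_right_comm, tsub_add_cancel_of_le (w.single_var_le_expVec p)]
  have hidx : w'.idx ≤ w.idx := fun j =>
    var_le_var_iff.1 <| le_of_card_filter_le_le w'.var_monotone w.var_monotone (fun x => by
      simpa only [card_filter_le_eq_sum_Iic, expVec] using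
        sum_Iic_le_sum_Iic_of_add_single_eq hi hexchange x) j
  exact seqLE_trans (seqLE_of_le hidx) hw

/-- **(Initial lexsegments are `t`-spread strongly stable).** Let `v ∈ M_{n,d,t}`. For every
`ω ∈ L^i_t(v)`, every `j` with `x_j ∣ ω`, and every `i < j` such that
`x_i(ω/x_j) ∈ M_{n,d,t}`, one has `x_i(ω/x_j) ∈ L^i_t(v)`. Here `x_j` runs through the
variables dividing `ω` (`j = ω.idx p`), `i` is a variable index (0-based `i : Fin n`, so
`i < j` reads `(i : ℕ) + 1 < ω.idx p`), and `x_i(ω/x_j)` is encoded by its exponent vector. -/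
theorem stmt11 (n d t : ℕ) (hn : 1 ≤ n) (hd : 1 ≤ d) (ht : 1 ≤ t)
    (v : SpreadMono n d t) (w : SpreadMono n d t) (hw : w ∈ initialSeg v)
    (p : Fin d) (i : Fin n) (hij : (i : ℕ) + 1 < w.idx p)
    (w' : SpreadMono n d t)
    (hw' : w'.expVec = w.expVec - Finsupp.single (w.var p) 1 + Finsupp.single i 1) :
    w' ∈ initialSeg v :=
  stmt11_general n d t v w hw p i hij w' hw'
end
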